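/- arXiv:1801.00823 — 2 statements merged into one kernel-verified Lean document; each statement's English description precedes it below -/
import Mathlib

section
/- For square real matrices A, B ∈ ℝ^{n×n} with nonincreasingly ordered singular values σ_i(A), σ_i(B), the von Neumann trace inequality holds: tr(A Bᵀ) ≤ ∑_{i=1}^{n} σ_i(A) σ_i(B). -/
open Matrix

noncomputable def frob {m n : Type*} [Fintype m] [Fintype n] (A : Matrix m n ℝ) : ℝ :=
  Real.sqrt (∑ i, ∑ j, (A i j)^2)

/-- The singular values of a real matrix `A`: square roots of the eigenvalues of `Aᵀ * A`. -/
noncomputable def singVals {m n : ℕ} (A : Matrix (Fin m) (Fin n) ℝ) : Fin n → ℝ :=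
  fun i => Real.sqrt ((show (Aᵀ * A).IsHermitian by simpa using Matrix.isHermitian_conjTranspose_mul_self A).eigenvalues i)

/-!
For real symmetric `X`, `Y` with orthonormal eigenbases `U`, `V`, `tr (X Y) = λ ⬝ᵥ (S *ᵥ μ)` where
`S i j = ((Uᵀ V) i j)²` is doubly stochastic. By Birkhoff's theorem `S` is a convex combination of
permutation matrices, so the rearrangement inequality bounds `tr (X Y)` by `∑ λ_k μ_k` once the
eigenvalues are listed in the same order.

A general square `A` is reduced to this via the symmetric dilation `M_A = [[0, A], [Aᵀ, 0]]`:
its characteristic polynomial is `det (X² - Aᵀ A)`, so its eigenvalues are `±σ_i(A)`, and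
`tr (M_A M_B) = 2 tr (A Bᵀ)`.
-/

open Polynomial

section DoublyStochastic

variable {R ι κ : Type*} [Fintype ι] [DecidableEq ι] [Fintype κ] [DecidableEq κ]

lemma Matrix.submatrix_mem_doublyStochastic [Semiring R] [PartialOrder R] [IsOrderedRing R]
    {S : Matrix ι ι R} (hS : S ∈ doublyStochastic R ι) (φ ψ : κ ≃ ι) :
    S.submatrix φ ψ ∈ doublyStochastic R κ := by
  rw [mem_doublyStochastic_iff_sum] at hS ⊢
  obtain ⟨hnonneg, hrow, hcol⟩ := hS
  exact ⟨fun _ _ => hnonneg _ _, fun k => (ψ.sum_comp (S (φ k))).trans (hrow _),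
    fun l => (φ.sum_comp (S · (ψ l))).trans (hcol _)⟩

theorem Monovary.dotProduct_mulVec_le_of_mem_doublyStochastic [Field R] [LinearOrder R]
    [IsStrictOrderedRing R] {f g : ι → R} (hfg : Monovary f g) {S : Matrix ι ι R}
    (hS : S ∈ doublyStochastic R ι) : f ⬝ᵥ (S *ᵥ g) ≤ f ⬝ᵥ g := by
  obtain ⟨w, hw0, hw1, rfl⟩ := exists_eq_sum_perm_of_mem_doublyStochastic hS
  calc f ⬝ᵥ ((∑ σ, w σ • σ.permMatrix R) *ᵥ g)
      = ∑ σ, w σ * ∑ i, f i * g (σ i) := by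
        simp only [sum_mulVec, smul_mulVec, permMatrix_mulVec, dotProduct_sum, dotProduct_smul,
          smul_eq_mul]
        rfl
    _ ≤ ∑ σ, w σ * ∑ i, f i * g i :=
        Finset.sum_le_sum fun σ _ => mul_le_mul_of_nonneg_left
          hfg.sum_mul_comp_perm_le_sum_mul (hw0 σ)
    _ = f ⬝ᵥ g := by rw [← Finset.sum_mul, hw1, one_mul, dotProduct]

lemma Matrix.map_sq_mem_doublyStochastic {W : Matrix ι ι ℝ} (hW : W ∈ orthogonalGroup ι ℝ) :
    W.map (· ^ 2) ∈ doublyStochastic ℝ ι := by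
  have hrow := congrFun₂ ((mem_orthogonalGroup_iff ι ℝ).1 hW)
  have hcol := congrFun₂ ((mem_orthogonalGroup_iff' ι ℝ).1 hW)
  rw [mem_doublyStochastic_iff_sum]
  refine ⟨fun i j => sq_nonneg _, fun i => ?_, fun j => ?_⟩
  · simpa [mul_apply, sq] using hrow i i
  · simpa [mul_apply, sq] using hcol j j

end DoublyStochastic

section SymmetricTrace

variable {ι κ : Type*} [Fintype ι] [DecidableEq ι] [Fintype κ] [DecidableEq κ]

lemma Matrix.IsHermitian.eq_mul_diagonal_mul_transpose {X : Matrix ι ι ℝ} (hX : X.IsHermitian) :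
    X = hX.eigenvectorUnitary * diagonal hX.eigenvalues *
      (hX.eigenvectorUnitary : Matrix ι ι ℝ)ᵀ := by
  conv_lhs => rw [hX.spectral_theorem]
  simp [Unitary.conjStarAlgAut_apply, star_eq_conjTranspose]

lemma Matrix.trace_diagonal_mul_mul_diagonal_mul_transpose (a b : ι → ℝ) (W : Matrix ι ι ℝ) :
    trace (diagonal a * W * diagonal b * Wᵀ) = a ⬝ᵥ (W.map (· ^ 2) *ᵥ b) := by
  refine Finset.sum_congr rfl fun i _ => ?_
  rw [diag_apply, mul_apply, mulVec, dotProduct, Finset.mul_sum]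
  refine Finset.sum_congr rfl fun j _ => ?_
  rw [mul_diagonal, diagonal_mul, transpose_apply, map_apply]
  ring

lemma Matrix.IsHermitian.exists_trace_mul_eq {X Y : Matrix ι ι ℝ} (hX : X.IsHermitian)
    (hY : Y.IsHermitian) : ∃ W ∈ orthogonalGroup ι ℝ,
      trace (X * Y) = hX.eigenvalues ⬝ᵥ (W.map (· ^ 2) *ᵥ hY.eigenvalues) := by
  have hcyc : ∀ U V : Matrix ι ι ℝ,
      trace (U * diagonal hX.eigenvalues * Uᵀ * (V * diagonal hY.eigenvalues * Vᵀ))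
        = trace (diagonal hX.eigenvalues * (Uᵀ * V) * diagonal hY.eigenvalues * (Uᵀ * V)ᵀ) := by
    intro U V
    rw [transpose_mul, transpose_transpose, mul_assoc, mul_assoc, trace_mul_comm U]
    simp only [mul_assoc]
  refine ⟨_, Submonoid.mul_mem _ (Unitary.star_mem hX.eigenvectorUnitary.2)
    hY.eigenvectorUnitary.2, ?_⟩
  conv_lhs => rw [hX.eq_mul_diagonal_mul_transpose, hY.eq_mul_diagonal_mul_transpose, hcyc]
  exact trace_diagonal_mul_mul_diagonal_mul_transpose _ _ _

theorem Matrix.IsHermitian.trace_mul_le_of_monovary {X Y : Matrix ι ι ℝ} (hX : X.IsHermitian)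
    (hY : Y.IsHermitian) (φ ψ : κ ≃ ι)
    (h : Monovary (hX.eigenvalues ∘ φ) (hY.eigenvalues ∘ ψ)) :
    trace (X * Y) ≤ ∑ k, hX.eigenvalues (φ k) * hY.eigenvalues (ψ k) := by
  obtain ⟨W, hW, htr⟩ := hX.exists_trace_mul_eq hY
  have hreindex : hX.eigenvalues ⬝ᵥ (W.map (· ^ 2) *ᵥ hY.eigenvalues)
      = (hX.eigenvalues ∘ φ) ⬝ᵥ ((W.map (· ^ 2)).submatrix φ ψ *ᵥ (hY.eigenvalues ∘ ψ)) := by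
    rw [submatrix_mulVec_equiv, Function.comp_assoc, ψ.self_comp_symm, Function.comp_id,
      comp_equiv_dotProduct_comp_equiv]
  rw [htr, hreindex]
  exact h.dotProduct_mulVec_le_of_mem_doublyStochastic
    (submatrix_mem_doublyStochastic (map_sq_mem_doublyStochastic hW) φ ψ)

end SymmetricTrace

lemma Fintype.exists_equiv_of_map_univ_eq {α β γ : Type*} [Fintype α] [Fintype β]
    [DecidableEq γ] {f : α → γ} {g : β → γ}
    (h : Finset.univ.val.map f = Finset.univ.val.map g) : ∃ e : α ≃ β, ∀ a, g (e a) = f a := by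
  have hfiber : ∀ c, Fintype.card {a // f a = c} = Fintype.card {b // g b = c} := fun c => by
    have := congrArg (Multiset.count c) h
    simp only [Multiset.count_map, eq_comm (a := c)] at this
    simpa only [Fintype.card_subtype, Finset.card_def, Finset.filter_val] using this
  exact ⟨Equiv.ofFiberEquiv fun c => Fintype.equivOfCardEq (hfiber c), Equiv.ofFiberEquiv_map _⟩

lemma Polynomial.roots_prod_univ_X_sub_C {R ι : Type*} [CommRing R] [IsDomain R] [Fintype ι]
    (d : ι → R) : (∏ k, (X - C (d k))).roots = Finset.univ.val.map d := by
  have := roots_multiset_prod_X_sub_C (Finset.univ.val.map d)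
  rwa [Multiset.map_map] at this

lemma Matrix.IsHermitian.exists_equiv_eigenvalues_eq {ι κ : Type*} [Fintype ι] [DecidableEq ι]
    [Fintype κ] {X : Matrix ι ι ℝ} (hX : X.IsHermitian) {d : κ → ℝ}
    (h : X.charpoly = ∏ k, (Polynomial.X - C (d k))) :
    ∃ e : κ ≃ ι, ∀ k, hX.eigenvalues (e k) = d k := by
  refine Fintype.exists_equiv_of_map_univ_eq ?_
  rw [← roots_prod_univ_X_sub_C, ← h, hX.roots_charpoly_eq_eigenvalues]
  rfl

section Charpoly

variable {R n : Type*} [CommRing R] [Fintype n] [DecidableEq n]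

lemma Matrix.charpoly_comp (M : Matrix n n R) (p : R[X]) :
    M.charpoly.comp p = det (scalar n p - M.map C) := by
  rw [Polynomial.comp, ← eval_map, ← charpoly_map, eval_charpoly]

lemma Matrix.charpoly_fromBlocks_zero₁₁_zero₂₂ (A B : Matrix n n R) :
    (fromBlocks 0 A B 0).charpoly = (B * A).charpoly.comp (X ^ 2) := by
  have hscalar : ∀ p : R[X], scalar n p = p • 1 := fun p => by
    rw [scalar_apply, smul_one_eq_diagonal]
  have hfactor : charmatrix (fromBlocks 0 A B 0) *
      fromBlocks ((X : R[X]) • 1) (A.map C) 0 ((X : R[X]) • 1) =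
        fromBlocks ((X ^ 2 : R[X]) • 1) 0 (-((X : R[X]) • B.map C))
          (scalar n (X ^ 2) - (B * A).map C) := by
    rw [charmatrix_fromBlocks, fromBlocks_multiply]
    simp [charmatrix, hscalar, Matrix.map_mul, sq, smul_smul, neg_add_eq_sub]
  have hdet := congrArg det hfactor
  rw [det_mul, det_fromBlocks_zero₂₁, det_fromBlocks_zero₁₂, ← charpoly, ← charpoly_comp] at hdet
  simp only [det_smul, det_one, mul_one] at hdet
  refine (isRegular_X_pow (2 * Fintype.card n)).right ?_
  linear_combination hdet

end Charpoly

lemma sq_singVals {m n : ℕ} (A : Matrix (Fin m) (Fin n) ℝ) (hA : (Aᵀ * A).IsHermitian)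
    (i : Fin n) : singVals A i ^ 2 = hA.eigenvalues i := by
  have hpsd := posSemidef_conjTranspose_mul_self A
  rw [conjTranspose_eq_transpose_of_trivial] at hpsd
  exact Real.sq_sqrt (hpsd.eigenvalues_nonneg i)

lemma charpoly_fromBlocks_zero_transpose {n : ℕ} (A : Matrix (Fin n) (Fin n) ℝ)
    {σ : Fin n → ℝ} (e : Equiv.Perm (Fin n)) (hσ : ∀ i, σ i = singVals A (e i)) :
    (fromBlocks 0 A Aᵀ 0).charpoly = ∏ k, (X - C (Sum.elim σ (-σ) k)) := by
  have hAA : (Aᵀ * A).IsHermitian := by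
    simpa using isHermitian_conjTranspose_mul_self A
  rw [charpoly_fromBlocks_zero₁₁_zero₂₂, hAA.charpoly_eq, prod_comp, ← Equiv.prod_comp e,
    Fintype.prod_sum_type, ← Finset.prod_mul_distrib]
  refine Finset.prod_congr rfl fun i _ => ?_
  rw [sub_comp, X_comp, C_comp, Sum.elim_inl, Sum.elim_inr, Pi.neg_apply, C_neg, hσ,
    RCLike.ofReal_real_eq_id, id, ← sq_singVals A hAA (e i), C_pow]
  ring

theorem Matrix.trace_fromBlocks_zero_mul_fromBlocks_zero {R m n : Type*} [Fintype m] [Fintype n]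
    [NonUnitalNonAssocSemiring R] (A : Matrix m n R) (B : Matrix n m R) (C : Matrix m n R)
    (D : Matrix n m R) :
    trace (fromBlocks 0 A B 0 * fromBlocks 0 C D 0) = trace (A * D) + trace (B * C) := by
  simp [fromBlocks_multiply, trace, Fintype.sum_sum_type]

lemma Matrix.isHermitian_fromBlocks_zero_transpose {m n : Type*} (A : Matrix m n ℝ) :
    (fromBlocks 0 A Aᵀ 0).IsHermitian :=
  isHermitian_zero.fromBlocks (conjTranspose_eq_transpose_of_trivial A) isHermitian_zero

lemma Monovary.sumElim_neg {ι α β : Type*} [AddCommGroup α] [PartialOrder α]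
    [IsOrderedAddMonoid α] [AddCommGroup β] [PartialOrder β] [IsOrderedAddMonoid β]
    {f : ι → α} {g : ι → β} (h : Monovary f g) (hf : 0 ≤ f) (hg : 0 ≤ g) :
    Monovary (Sum.elim f (-f)) (Sum.elim g (-g)) := by
  rintro (i | i) (j | j) hij <;> simp only [Sum.elim_inl, Sum.elim_inr, Pi.neg_apply] at hij ⊢
  · exact h hij
  · exact (hij.trans_le ((neg_nonpos.2 (hg j)).trans (hg i))).false.elim
  · exact (neg_nonpos.2 (hf i)).trans (hf j)
  · exact neg_le_neg (h (neg_lt_neg_iff.1 hij))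

/-- von Neumann trace inequality: `tr(A Bᵀ) ≤ ∑ σ_i(A) σ_i(B)` with singular values
ordered nonincreasingly. -/
theorem stmt2 {n : ℕ} (A B : Matrix (Fin n) (Fin n) ℝ)
    (σA σB : Fin n → ℝ) (eA eB : Equiv.Perm (Fin n))
    (hA : ∀ i, σA i = singVals A (eA i)) (hB : ∀ i, σB i = singVals B (eB i))
    (hAm : Antitone σA) (hBm : Antitone σB) :
    Matrix.trace (A * Bᵀ) ≤ ∑ i, σA i * σB i := by
  have hσA : 0 ≤ σA := fun i => (hA i).symm ▸ Real.sqrt_nonneg _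
  have hσB : 0 ≤ σB := fun i => (hB i).symm ▸ Real.sqrt_nonneg _
  have hMA := isHermitian_fromBlocks_zero_transpose A
  have hMB := isHermitian_fromBlocks_zero_transpose B
  obtain ⟨φ, hφ⟩ := hMA.exists_equiv_eigenvalues_eq (charpoly_fromBlocks_zero_transpose A eA hA)
  obtain ⟨ψ, hψ⟩ := hMB.exists_equiv_eigenvalues_eq (charpoly_fromBlocks_zero_transpose B eB hB)
  have hmono : Monovary (hMA.eigenvalues ∘ φ) (hMB.eigenvalues ∘ ψ) := by
    rw [show hMA.eigenvalues ∘ φ = _ from funext hφ, show hMB.eigenvalues ∘ ψ = _ from funext hψ]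
    exact (hAm.monovary hBm).sumElim_neg hσA hσB
  have key := hMA.trace_mul_le_of_monovary hMB φ ψ hmono
  have htrace : trace (Aᵀ * B) = trace (A * Bᵀ) := by
    rw [← trace_transpose, transpose_mul, transpose_transpose, trace_mul_comm]
  rw [trace_fromBlocks_zero_mul_fromBlocks_zero, htrace] at key
  simp only [hφ, hψ, Fintype.sum_sum_type, Sum.elim_inl, Sum.elim_inr, Pi.neg_apply,
    neg_mul_neg] at key
  linarith
end

section
/- Let X ~ χ²(d) be a chi-squared random variable with d degrees of freedom. Then for any δ ∈ (0,1), with ζ(δ)² = d + 2√(−d ln δ) − 2 ln δ, we have P[X ≤ ζ(δ)²] ≥ 1 − δ. -/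
/-!
Chernoff's method: a sum `S` of `d` squares of independent standard normals has
`E[exp (λ S)] = (1 - 2λ)^(-d/2)` for `λ < 1/2`, so
`P[S ≥ a] ≤ exp (-λ a - d/2 log (1 - 2λ))`.
With `a = d + 2√(dt) + 2t`, the choice `λ = √t / (√d + 2√t)` and the bound
`-log (1 - x) ≤ x + x² / (2(1 - x))`, the exponent collapses exactly to `-t`.
-/

open MeasureTheory ProbabilityTheory Real
open scoped NNReal

lemma neg_log_one_sub_le {x : ℝ} (hx0 : 0 ≤ x) (hx1 : x < 1) :
    -log (1 - x) ≤ x + x ^ 2 / (2 * (1 - x)) := by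
  have hseries : HasSum (fun n : ℕ => x ^ (n + 1) / (n + 1)) (-log (1 - x)) :=
    hasSum_pow_div_log_of_abs_lt_one (by rwa [abs_of_nonneg hx0])
  -- termwise majorant: `x` for `n = 0`, then `x ^ (n + 1) / 2`
  have hmajorant : HasSum (fun n : ℕ => x / 2 * x ^ n + if n = 0 then x / 2 else 0)
      (x + x ^ 2 / (2 * (1 - x))) := by
    have : 1 - x ≠ 0 := by linarith
    rw [show x + x ^ 2 / (2 * (1 - x)) = x / 2 * (1 - x)⁻¹ + x / 2 by field_simp; ring]
    exact ((hasSum_geometric_of_lt_one hx0 hx1).mul_left (x / 2)).add (hasSum_ite_eq 0 (x / 2))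
  refine hasSum_le (fun n => ?_) hseries hmajorant
  rcases n with _ | n
  · norm_num
  · rw [if_neg n.succ_ne_zero, add_zero, div_mul_eq_mul_div, ← pow_succ']
    gcongr
    push_cast
    linarith [n.cast_nonneg (α := ℝ)]

lemma laurentMassart_exponent_le {p q : ℝ} (hp : 0 < p) (hq : 0 < q) :
    -(q / (p + 2 * q) * (p ^ 2 + 2 * (p * q) + 2 * q ^ 2))
      - p ^ 2 / 2 * log (1 - 2 * (q / (p + 2 * q))) ≤ -q ^ 2 := by
  have hpq : 0 < p + 2 * q := by positivity
  have hl : 1 - 2 * (q / (p + 2 * q)) = p / (p + 2 * q) := by field_simp; ring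
  have hlog := neg_log_one_sub_le (x := 2 * (q / (p + 2 * q))) (by positivity)
    (by rw [← sub_pos, hl]; positivity)
  rw [hl] at hlog ⊢
  have hcancel : p ^ 2 / 2 * (2 * (q / (p + 2 * q))
        + (2 * (q / (p + 2 * q))) ^ 2 / (2 * (p / (p + 2 * q))))
      - q / (p + 2 * q) * (p ^ 2 + 2 * (p * q) + 2 * q ^ 2) = -q ^ 2 := by
    field_simp; ring
  nlinarith [mul_le_mul_of_nonneg_left hlog (by positivity : 0 ≤ p ^ 2 / 2)]

lemma integral_exp_mul_sq_gaussianReal {v : ℝ≥0} {l : ℝ} (hl : l * v < 1 / 2) :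
    ∫ x, exp (l * x ^ 2) ∂gaussianReal 0 v = (√(1 - 2 * l * v))⁻¹ := by
  rcases eq_or_ne v 0 with rfl | hv
  · simp [gaussianReal_zero_var]
  have hv' : (0 : ℝ) < v := by positivity
  have hb : 0 < 1 - 2 * l * v := by linarith
  have hsmul : (fun x => gaussianPDFReal 0 v x • exp (l * x ^ 2)) =
      fun x => (√(2 * π * v))⁻¹ * exp (-(1 / (2 * v) - l) * x ^ 2) := by
    funext x
    rw [gaussianPDFReal, smul_eq_mul, mul_assoc, ← exp_add]
    congr 2
    field_simp
    ring
  rw [integral_gaussianReal_eq_integral_smul hv, hsmul, integral_const_mul, integral_gaussian,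
    show π / (1 / (2 * v) - l) = 2 * π * v / (1 - 2 * l * v) by field_simp,
    sqrt_div' _ hb.le]
  field_simp

section SumOfSquares

variable {Ω ι : Type*} [MeasurableSpace Ω] {μ : Measure Ω} {v : ℝ≥0} {l : ℝ}

lemma ProbabilityTheory.HasLaw.mgf_sq_gaussianReal {X : Ω → ℝ}
    (hX : HasLaw X (gaussianReal 0 v) μ) (hl : l * v < 1 / 2) :
    mgf (fun ω => X ω ^ 2) μ l = (√(1 - 2 * l * v))⁻¹ := by
  rw [← integral_exp_mul_sq_gaussianReal hl, ← hX.integral_comp (by fun_prop)]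
  rfl

lemma ProbabilityTheory.HasLaw.integrable_exp_mul_sq_gaussianReal {X : Ω → ℝ}
    (hX : HasLaw X (gaussianReal 0 v) μ) (hl : l * v < 1 / 2) :
    Integrable (fun ω => exp (l * X ω ^ 2)) μ := by
  refine Integrable.of_integral_ne_zero ?_
  rw [← mgf, hX.mgf_sq_gaussianReal hl]
  have : 0 < 1 - 2 * l * v := by linarith
  positivity

variable [IsProbabilityMeasure μ] [Fintype ι] {X : ι → Ω → ℝ}

lemma measureReal_le_sum_sq_le (hmeas : ∀ i, Measurable (X i)) (hindep : iIndepFun X μ)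
    (hmap : ∀ i, μ.map (X i) = gaussianReal 0 v) (a : ℝ) (hl0 : 0 ≤ l) (hl : l * v < 1 / 2) :
    μ.real {ω | a ≤ ∑ i, X i ω ^ 2}
      ≤ exp (-(l * a) - Fintype.card ι / 2 * log (1 - 2 * l * v)) := by
  have hlaw i : HasLaw (X i) (gaussianReal 0 v) μ := ⟨(hmeas i).aemeasurable, hmap i⟩
  have hsq_meas i : Measurable fun ω => X i ω ^ 2 := (hmeas i).pow_const 2
  have hsq_indep : iIndepFun (fun i ω => X i ω ^ 2) μ :=
    hindep.comp (fun _ x => x ^ 2) fun _ => measurable_id.pow_const 2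
  have hchernoff := measure_ge_le_exp_mul_mgf a hl0
    (hsq_indep.integrable_exp_mul_sum (s := Finset.univ) hsq_meas
      fun i _ => (hlaw i).integrable_exp_mul_sq_gaussianReal hl)
  rw [hsq_indep.mgf_sum hsq_meas] at hchernoff
  simp only [(hlaw _).mgf_sq_gaussianReal hl, Finset.prod_const, Finset.card_univ,
    Finset.sum_apply] at hchernoff
  refine hchernoff.trans_eq ?_
  have : 0 < 1 - 2 * l * v := by linarith
  have hsqrt : (√(1 - 2 * l * v))⁻¹ = exp (-(log (1 - 2 * l * v) / 2)) := by
    rw [sqrt_eq_rpow, rpow_def_of_pos this, exp_neg]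
    ring_nf
  rw [hsqrt, ← exp_nat_mul, ← exp_add]
  ring_nf

theorem measureReal_card_add_le_sum_sq_le_exp_neg (hmeas : ∀ i, Measurable (X i))
    (hindep : iIndepFun X μ) (hmap : ∀ i, μ.map (X i) = gaussianReal 0 1) {t : ℝ}
    (ht : 0 < t) :
    μ.real {ω | Fintype.card ι + 2 * √(Fintype.card ι * t) + 2 * t ≤ ∑ i, X i ω ^ 2}
      ≤ exp (-t) := by
  rcases (Fintype.card ι).eq_zero_or_pos with hd | hd
  · have : IsEmpty ι := Fintype.card_eq_zero_iff.1 hd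
    have h2t : ¬ 2 * t ≤ 0 := by linarith
    simp [h2t, (exp_pos _).le]
  set p := √(Fintype.card ι : ℝ)
  set q := √t
  have hp : 0 < p := by positivity
  have hq : 0 < q := by positivity
  have hl : q / (p + 2 * q) * (1 : ℝ≥0) < 1 / 2 := by
    rw [NNReal.coe_one, mul_one, div_lt_iff₀ (by positivity)]; linarith
  have hp2 : p ^ 2 = Fintype.card ι := sq_sqrt (Nat.cast_nonneg _)
  have hq2 : q ^ 2 = t := sq_sqrt ht.le
  have hthreshold : Fintype.card ι + 2 * √(Fintype.card ι * t) + 2 * t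
      = p ^ 2 + 2 * (p * q) + 2 * q ^ 2 := by
    rw [hp2, hq2, sqrt_mul' _ ht.le]
  rw [hthreshold]
  refine (measureReal_le_sum_sq_le hmeas hindep hmap _ (by positivity) hl).trans (exp_le_exp.2 ?_)
  rw [NNReal.coe_one, mul_one, ← hp2, ← hq2]
  exact laurentMassart_exponent_le hp hq

end SumOfSquares

/-- Laurent–Massart bound for a chi-squared random variable with d degrees of freedom
(realized as the sum of squares of d i.i.d. standard normals):
`P[X ≤ ζ(δ)²] ≥ 1 − δ` where `ζ(δ)² = d + 2√(−d ln δ) − 2 ln δ`. -/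
theorem stmt15 {Ω : Type*} [MeasurableSpace Ω] (μ : Measure Ω) [IsProbabilityMeasure μ]
    (d : ℕ) (X : Fin d → Ω → ℝ)
    (hmeas : ∀ i, Measurable (X i))
    (hindep : iIndepFun X μ)
    (hdist : ∀ i, μ.map (X i) = gaussianReal 0 1)
    (δ : ℝ) (hδ : δ ∈ Set.Ioo (0 : ℝ) 1) :
    1 - ENNReal.ofReal δ ≤
      μ {ω | ∑ i, (X i ω)^2 ≤
        (d : ℝ) + 2 * Real.sqrt (-(d : ℝ) * Real.log δ) - 2 * Real.log δ} := by
  obtain ⟨hδ0, hδ1⟩ := hδ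
  have htail := measureReal_card_add_le_sum_sq_le_exp_neg hmeas hindep hdist
    (neg_pos.2 (log_neg hδ0 hδ1))
  rw [Fintype.card_fin, neg_neg, exp_log hδ0] at htail
  set S := {ω | ∑ i, (X i ω)^2 ≤ (d : ℝ) + 2 * √(-(d : ℝ) * log δ) - 2 * log δ}
  set T := {ω | d + 2 * √(d * -log δ) + 2 * -log δ ≤ ∑ i, X i ω ^ 2}
  have hcompl : μ Sᶜ ≤ ENNReal.ofReal δ := by
    calc μ Sᶜ ≤ μ T := by
          refine measure_mono fun ω hω => ?_
          simp only [S, T, Set.mem_compl_iff, Set.mem_ofPred_eq, not_le,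
            ← neg_mul_comm] at hω ⊢
          linarith
      _ = ENNReal.ofReal (μ.real T) := by rw [ofReal_measureReal]
      _ ≤ ENNReal.ofReal δ := ENNReal.ofReal_le_ofReal htail
  calc 1 - ENNReal.ofReal δ ≤ 1 - μ Sᶜ := tsub_le_tsub_left hcompl 1
    _ ≤ μ S := by
      rw [tsub_le_iff_right, ← measure_univ (μ := μ), ← Set.union_compl_self S]
      exact measure_union_le _ _
end
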